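/- Let d ≥ 1 and let {S_i}_{i∈I} be a bounded family of matrices in Matrix d d ℂ indexed by a nonempty set I. Then for every ε > 0 there exists a norm N on ℂ^d such that the operator norm of S_i induced by N satisfies N_op(S_i) ≤ ρ̂(S) + ε for every i ∈ I. Consequently, ρ̂(S) = inf over all norms N on ℂ^d of sup_{i∈I} N_op(S_i). -/

import Mathlib

open Filter Topology MeasureTheory

/-- Operator norm on `d × d` complex matrices induced by the Euclidean norm on `ℂ^d`. -/
noncomputable def opNorm {d : ℕ} (A : Matrix (Fin d) (Fin d) ℂ) : ℝ :=
  ‖Matrix.toEuclideanCLM (𝕜 := ℂ) A‖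

/-- `prodS S x n = S_{i_n} ⋯ S_{i_1}` where `i_k = x (k-1)`. -/
noncomputable def prodS {d : ℕ} {I : Type*} (S : I → Matrix (Fin d) (Fin d) ℂ)
    (x : ℕ → I) : ℕ → Matrix (Fin d) (Fin d) ℂ
  | 0 => 1
  | n + 1 => S (x n) * prodS S x n

/-- `N` is a (vector) norm on `ℂ^d`. -/
def IsNorm {d : ℕ} (N : (Fin d → ℂ) → ℝ) : Prop :=
  (∀ x, 0 ≤ N x) ∧ (∀ x, N x = 0 ↔ x = 0) ∧
    (∀ (c : ℂ) (x), N (c • x) = ‖c‖ * N x) ∧ ∀ x y, N (x + y) ≤ N x + N y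

/-- The operator norm of a matrix induced by a vector norm `N` on `ℂ^d`. -/
noncomputable def inducedOpNorm {d : ℕ} (N : (Fin d → ℂ) → ℝ)
    (A : Matrix (Fin d) (Fin d) ℂ) : ℝ :=
  ⨆ x : {x : Fin d → ℂ // N x = 1}, N (A.mulVec x.1)

/-! For `r > ρ̂(S)` all words satisfy `‖S_w‖ ≤ K rⁿ`, so `N v = sup_{n, w ∈ Iⁿ} ‖S_w v‖ / rⁿ` is
finite. It dominates the Euclidean norm (take `n = 0`), and `N (S_i v) ≤ r N v` because
`‖S_w S_i v‖ / rⁿ = r ‖S_{iw} v‖ / rⁿ⁺¹` for the word `iw` obtained by prepending `i`.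
Conversely, for any norm `N` the induced operator norm is submultiplicative and, in finite
dimension, equivalent to the Euclidean one, so `‖S_w‖ ≤ K Mⁿ` with `M = sup_i N_op(S_i)`,
whence `ρ̂(S) ≤ M`. -/

open scoped Matrix

section

variable {d : ℕ}

lemma opNorm_nonneg (A : Matrix (Fin d) (Fin d) ℂ) : 0 ≤ opNorm A := norm_nonneg _

lemma opNorm_mul_le (A B : Matrix (Fin d) (Fin d) ℂ) : opNorm (A * B) ≤ opNorm A * opNorm B := by
  rw [opNorm, map_mul]
  exact norm_mul_le _ _

lemma opNorm_one_le : opNorm (1 : Matrix (Fin d) (Fin d) ℂ) ≤ 1 := by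
  rw [opNorm, map_one]
  exact ContinuousLinearMap.norm_id_le

lemma norm_toLp_mulVec_le (A : Matrix (Fin d) (Fin d) ℂ) (v : Fin d → ℂ) :
    ‖WithLp.toLp 2 (A *ᵥ v)‖ ≤ opNorm A * ‖WithLp.toLp 2 v‖ :=
  (Matrix.toEuclideanCLM (𝕜 := ℂ) A).le_opNorm (WithLp.toLp 2 v)

/-- `ℂ^d` normed by `N`; carrying the proof `hN` in the type lets the normed-space structure be
an instance. -/
def NormedVec (N : (Fin d → ℂ) → ℝ) (_hN : IsNorm N) : Type := Fin d → ℂ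

namespace NormedVec

variable {N : (Fin d → ℂ) → ℝ} {hN : IsNorm N}

instance : AddCommGroup (NormedVec N hN) := inferInstanceAs (AddCommGroup (Fin d → ℂ))

instance : Module ℂ (NormedVec N hN) := inferInstanceAs (Module ℂ (Fin d → ℂ))

instance : FiniteDimensional ℂ (NormedVec N hN) :=
  inferInstanceAs (FiniteDimensional ℂ (Fin d → ℂ))

instance : Norm (NormedVec N hN) := ⟨N⟩

theorem normedSpaceCore : NormedSpace.Core ℂ (NormedVec N hN) where
  norm_nonneg := hN.1
  norm_eq_zero_iff := hN.2.1
  norm_smul := hN.2.2.1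
  norm_triangle := hN.2.2.2

noncomputable instance : NormedAddCommGroup (NormedVec N hN) :=
  NormedAddCommGroup.ofCore normedSpaceCore

noncomputable instance : NormedSpace ℂ (NormedVec N hN) := NormedSpace.ofCore normedSpaceCore

noncomputable def mulVecCLM (A : Matrix (Fin d) (Fin d) ℂ) :
    NormedVec N hN →L[ℂ] NormedVec N hN :=
  LinearMap.toContinuousLinearMap (Matrix.toLin' A : (Fin d → ℂ) →ₗ[ℂ] (Fin d → ℂ))

noncomputable def ofEuclidean : EuclideanSpace ℂ (Fin d) ≃L[ℂ] NormedVec N hN :=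
  LinearEquiv.toContinuousLinearEquiv (WithLp.linearEquiv 2 ℂ (Fin d → ℂ))

theorem inducedOpNorm_eq_norm_mulVecCLM (A : Matrix (Fin d) (Fin d) ℂ) :
    inducedOpNorm N A = ‖(mulVecCLM A : NormedVec N hN →L[ℂ] NormedVec N hN)‖ := by
  have hsphere : Metric.sphere (0 : NormedVec N hN) 1 = {x : NormedVec N hN | N x = 1} :=
    Set.ext fun _ => mem_sphere_zero_iff_norm
  rw [← ContinuousLinearMap.sSup_sphere_eq_norm, hsphere, sSup_image']
  rfl

theorem mulVecCLM_mul (A B : Matrix (Fin d) (Fin d) ℂ) :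
    (mulVecCLM (A * B) : NormedVec N hN →L[ℂ] NormedVec N hN) = mulVecCLM A * mulVecCLM B := by
  ext x
  simp only [mulVecCLM, Matrix.toLin'_mul]
  rfl

theorem mulVecCLM_one : (mulVecCLM 1 : NormedVec N hN →L[ℂ] NormedVec N hN) = 1 := by
  ext x
  simp only [mulVecCLM, Matrix.toLin'_one]
  rfl

theorem toEuclideanCLM_eq_conj (A : Matrix (Fin d) (Fin d) ℂ) :
    Matrix.toEuclideanCLM (𝕜 := ℂ) A =
      (ofEuclidean (hN := hN)).symm.toContinuousLinearMap ∘L mulVecCLM A ∘L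
        (ofEuclidean (hN := hN)).toContinuousLinearMap :=
  rfl

theorem mulVecCLM_eq_conj (A : Matrix (Fin d) (Fin d) ℂ) :
    (mulVecCLM A : NormedVec N hN →L[ℂ] NormedVec N hN) =
      ofEuclidean.toContinuousLinearMap ∘L Matrix.toEuclideanCLM (𝕜 := ℂ) A ∘L
        ofEuclidean.symm.toContinuousLinearMap :=
  rfl

end NormedVec

namespace IsNorm

variable {N : (Fin d → ℂ) → ℝ}

lemma inducedOpNorm_nonneg (hN : IsNorm N) (A : Matrix (Fin d) (Fin d) ℂ) :
    0 ≤ inducedOpNorm N A :=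
  Real.iSup_nonneg fun _ => hN.1 _

lemma inducedOpNorm_mul_le (hN : IsNorm N) (A B : Matrix (Fin d) (Fin d) ℂ) :
    inducedOpNorm N (A * B) ≤ inducedOpNorm N A * inducedOpNorm N B := by
  simp only [NormedVec.inducedOpNorm_eq_norm_mulVecCLM (hN := hN), NormedVec.mulVecCLM_mul]
  exact norm_mul_le _ _

lemma inducedOpNorm_one_le (hN : IsNorm N) :
    inducedOpNorm N (1 : Matrix (Fin d) (Fin d) ℂ) ≤ 1 := by
  rw [NormedVec.inducedOpNorm_eq_norm_mulVecCLM (hN := hN), NormedVec.mulVecCLM_one]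
  exact ContinuousLinearMap.norm_id_le

lemma exists_opNorm_le_mul_inducedOpNorm (hN : IsNorm N) :
    ∃ K, 0 ≤ K ∧ ∀ A, opNorm A ≤ K * inducedOpNorm N A := by
  set e := NormedVec.ofEuclidean (hN := hN)
  refine ⟨‖e.symm.toContinuousLinearMap‖ * ‖e.toContinuousLinearMap‖, by positivity, fun A => ?_⟩
  rw [opNorm, NormedVec.toEuclideanCLM_eq_conj (hN := hN),
    NormedVec.inducedOpNorm_eq_norm_mulVecCLM (hN := hN)]
  calc _ ≤ ‖e.symm.toContinuousLinearMap‖ *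
        (‖NormedVec.mulVecCLM A‖ * ‖e.toContinuousLinearMap‖) :=
        (ContinuousLinearMap.opNorm_comp_le _ _).trans
          (mul_le_mul_of_nonneg_left (ContinuousLinearMap.opNorm_comp_le _ _) (norm_nonneg _))
    _ = _ := by ring

lemma exists_inducedOpNorm_le_mul_opNorm (hN : IsNorm N) :
    ∃ K, 0 ≤ K ∧ ∀ A, inducedOpNorm N A ≤ K * opNorm A := by
  set e := NormedVec.ofEuclidean (hN := hN)
  refine ⟨‖e.toContinuousLinearMap‖ * ‖e.symm.toContinuousLinearMap‖, by positivity, fun A => ?_⟩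
  rw [opNorm, NormedVec.inducedOpNorm_eq_norm_mulVecCLM (hN := hN),
    NormedVec.mulVecCLM_eq_conj]
  calc _ ≤ ‖e.toContinuousLinearMap‖ *
        (‖Matrix.toEuclideanCLM (𝕜 := ℂ) A‖ * ‖e.symm.toContinuousLinearMap‖) :=
        (ContinuousLinearMap.opNorm_comp_le _ _).trans
          (mul_le_mul_of_nonneg_left (ContinuousLinearMap.opNorm_comp_le _ _) (norm_nonneg _))
    _ = _ := by ring

end IsNorm

section Words

variable {I : Type*} (S : I → Matrix (Fin d) (Fin d) ℂ)

lemma prodS_succ' (x : ℕ → I) :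
    ∀ n, prodS S x (n + 1) = prodS S (fun k => x (k + 1)) n * S (x 0)
  | 0 => by simp [prodS]
  | n + 1 => by rw [prodS, prodS_succ' x n, prodS, mul_assoc]

variable {S}

lemma apply_prodS_le_pow {f : Matrix (Fin d) (Fin d) ℂ → ℝ} (hf₀ : ∀ A, 0 ≤ f A)
    (hf_mul : ∀ A B, f (A * B) ≤ f A * f B) (hf_one : f 1 ≤ 1) {M : ℝ} (hM : ∀ i, f (S i) ≤ M)
    (x : ℕ → I) : ∀ n, f (prodS S x n) ≤ M ^ n
  | 0 => hf_one.trans_eq (pow_zero M).symm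
  | n + 1 =>
    calc f (S (x n) * prodS S x n) ≤ f (S (x n)) * f (prodS S x n) := hf_mul _ _
      _ ≤ M * M ^ n :=
        mul_le_mul (hM _) (apply_prodS_le_pow hf₀ hf_mul hf_one hM x n) (hf₀ _)
          ((hf₀ (S (x n))).trans (hM (x n)))
      _ = M ^ (n + 1) := (pow_succ' M n).symm

lemma opNorm_prodS_le_pow {C : ℝ} (hC : ∀ i, opNorm (S i) ≤ C) (x : ℕ → I) (n : ℕ) :
    opNorm (prodS S x n) ≤ C ^ n :=
  apply_prodS_le_pow opNorm_nonneg opNorm_mul_le opNorm_one_le hC x n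

end Words

lemma rpow_one_div_le_iff {a b : ℝ} (ha : 0 ≤ a) (hb : 0 ≤ b) {n : ℕ} (hn : n ≠ 0) :
    a ^ (1 / (n : ℝ)) ≤ b ↔ a ≤ b ^ n := by
  rw [one_div, Real.rpow_inv_le_iff_of_pos ha hb (by positivity), Real.rpow_natCast]

lemma exists_le_mul_pow_of_eventually_le_pow {ι : Type*} {a : ι → ℕ → ℝ} {C r : ℝ} (hr : 0 < r)
    (hC : ∀ x n, a x n ≤ C ^ n) (hev : ∀ᶠ n in atTop, ∀ x, a x n ≤ r ^ n) :
    ∃ K, ∀ x n, a x n ≤ K * r ^ n := by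
  obtain ⟨n₀, hn₀⟩ := eventually_atTop.1 hev
  set q := max 1 (|C| / r)
  have hq : 1 ≤ q := le_max_left _ _
  refine ⟨q ^ n₀, fun x n => ?_⟩
  rcases le_or_gt n₀ n with h | h
  · exact (hn₀ n h x).trans (le_mul_of_one_le_left (by positivity) (one_le_pow₀ hq))
  · calc a x n ≤ |C| ^ n := (hC x n).trans ((le_abs_self _).trans_eq (abs_pow C n))
      _ = (|C| / r) ^ n * r ^ n := by rw [← mul_pow, div_mul_cancel₀ _ hr.ne']
      _ ≤ q ^ n₀ * r ^ n :=
        mul_le_mul_of_nonneg_right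
          ((pow_le_pow_left₀ (by positivity) (le_max_right _ _) n).trans
            (pow_le_pow_right₀ hq h.le)) (by positivity)

section JointSpectralRadius

variable {I : Type*} {S : I → Matrix (Fin d) (Fin d) ℂ}

variable (S) in
noncomputable def supWordNormRoot (n : ℕ) : ℝ :=
  ⨆ x : ℕ → I, opNorm (prodS S x n) ^ (1 / (n : ℝ))

variable (S) in
noncomputable def jointSpectralRadius : ℝ :=
  limsup (supWordNormRoot S) atTop

lemma supWordNormRoot_nonneg (n : ℕ) : 0 ≤ supWordNormRoot S n :=
  Real.iSup_nonneg fun _ => Real.rpow_nonneg (opNorm_nonneg _) _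

lemma opNorm_prodS_rpow_le {C : ℝ} (hC : ∀ i, opNorm (S i) ≤ C) (x : ℕ → I) (n : ℕ) :
    opNorm (prodS S x n) ^ (1 / (n : ℝ)) ≤ max C 1 := by
  rcases eq_or_ne n 0 with rfl | hn
  · simp
  have hC₀ : 0 ≤ C := (opNorm_nonneg _).trans (hC (x 0))
  exact ((rpow_one_div_le_iff (opNorm_nonneg _) hC₀ hn).2 (opNorm_prodS_le_pow hC x n)).trans
    (le_max_left _ _)

lemma bddAbove_range_opNorm_prodS_rpow {C : ℝ} (hC : ∀ i, opNorm (S i) ≤ C) (n : ℕ) :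
    BddAbove (Set.range fun x : ℕ → I => opNorm (prodS S x n) ^ (1 / (n : ℝ))) :=
  ⟨max C 1, Set.forall_mem_range.2 (opNorm_prodS_rpow_le hC · n)⟩

lemma isBoundedUnder_le_supWordNormRoot {C : ℝ} (hC : ∀ i, opNorm (S i) ≤ C) :
    IsBoundedUnder (· ≤ ·) atTop (supWordNormRoot S) :=
  isBoundedUnder_of ⟨max C 1, fun n =>
    Real.iSup_le (opNorm_prodS_rpow_le hC · n) (le_max_of_le_right zero_le_one)⟩

lemma jointSpectralRadius_nonneg {C : ℝ} (hC : ∀ i, opNorm (S i) ≤ C) :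
    0 ≤ jointSpectralRadius S :=
  le_limsup_of_frequently_le (Frequently.of_forall supWordNormRoot_nonneg)
    (isBoundedUnder_le_supWordNormRoot hC)

lemma exists_opNorm_prodS_le_mul_pow {C : ℝ} (hC : ∀ i, opNorm (S i) ≤ C) {r : ℝ}
    (hr : jointSpectralRadius S < r) :
    ∃ K, ∀ x n, opNorm (prodS S x n) ≤ K * r ^ n := by
  have hr₀ : 0 < r := (jointSpectralRadius_nonneg hC).trans_lt hr
  refine exists_le_mul_pow_of_eventually_le_pow hr₀ (opNorm_prodS_le_pow hC) ?_
  filter_upwards [eventually_lt_of_limsup_lt hr (isBoundedUnder_le_supWordNormRoot hC),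
    eventually_ne_atTop 0] with n hn hn₀ x
  exact (rpow_one_div_le_iff (opNorm_nonneg _) hr₀.le hn₀).1
    ((le_ciSup (bddAbove_range_opNorm_prodS_rpow hC n) x).trans hn.le)

lemma jointSpectralRadius_le_of_opNorm_prodS_le {K M : ℝ} (hM : 0 ≤ M)
    (hK : ∀ x n, opNorm (prodS S x n) ≤ K * M ^ n) : jointSpectralRadius S ≤ M := by
  set K' := max K 1
  have hK' : 0 < K' := lt_max_of_lt_right one_pos
  have hle : ∀ n, n ≠ 0 → supWordNormRoot S n ≤ K' ^ (1 / (n : ℝ)) * M := fun n hn =>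
    Real.iSup_le (fun x => (rpow_one_div_le_iff (opNorm_nonneg _) (by positivity) hn).2 <| by
      rw [mul_pow, one_div, Real.rpow_inv_natCast_pow hK'.le hn]
      exact (hK x n).trans (mul_le_mul_of_nonneg_right (le_max_left _ _) (by positivity)))
      (by positivity)
  have htend : Tendsto (fun n : ℕ => K' ^ (1 / (n : ℝ)) * M) atTop (𝓝 M) := by
    have := ((Real.continuousAt_const_rpow hK'.ne').tendsto.comp
      tendsto_one_div_atTop_nhds_zero_nat).mul_const M
    simpa using this
  calc jointSpectralRadius S ≤ limsup (fun n : ℕ => K' ^ (1 / (n : ℝ)) * M) atTop :=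
        limsup_le_limsup ((eventually_ne_atTop 0).mono hle)
          (isCoboundedUnder_le_of_le atTop supWordNormRoot_nonneg) htend.isBoundedUnder_le
    _ = M := htend.limsup_eq

lemma jointSpectralRadius_le_iSup_inducedOpNorm {C : ℝ} (hC : ∀ i, opNorm (S i) ≤ C)
    {N : (Fin d → ℂ) → ℝ} (hN : IsNorm N) :
    jointSpectralRadius S ≤ ⨆ i, inducedOpNorm N (S i) := by
  obtain ⟨K, hK₀, hK⟩ := hN.exists_inducedOpNorm_le_mul_opNorm
  obtain ⟨K', hK'₀, hK'⟩ := hN.exists_opNorm_le_mul_inducedOpNorm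
  have hbdd : BddAbove (Set.range fun i => inducedOpNorm N (S i)) :=
    ⟨K * C, Set.forall_mem_range.2 fun i =>
      (hK _).trans (mul_le_mul_of_nonneg_left (hC i) hK₀)⟩
  refine jointSpectralRadius_le_of_opNorm_prodS_le
    (Real.iSup_nonneg fun _ => hN.inducedOpNorm_nonneg _)
    fun x n => (hK' _).trans (mul_le_mul_of_nonneg_left ?_ hK'₀)
  exact apply_prodS_le_pow hN.inducedOpNorm_nonneg hN.inducedOpNorm_mul_le
    hN.inducedOpNorm_one_le (le_ciSup hbdd) x n

end JointSpectralRadius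

section RotaStrang

variable {I : Type*} {S : I → Matrix (Fin d) (Fin d) ℂ} {r K : ℝ}

variable (S r) in
noncomputable def rotaStrangNorm (v : Fin d → ℂ) : ℝ :=
  ⨆ p : ℕ × (ℕ → I), ‖WithLp.toLp 2 (prodS S p.2 p.1 *ᵥ v)‖ / r ^ p.1

lemma bddAbove_rotaStrangNorm_terms (hr : 0 < r)
    (hK : ∀ x n, opNorm (prodS S x n) ≤ K * r ^ n) (v : Fin d → ℂ) :
    BddAbove (Set.range fun p : ℕ × (ℕ → I) =>
      ‖WithLp.toLp 2 (prodS S p.2 p.1 *ᵥ v)‖ / r ^ p.1) := by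
  refine ⟨K * ‖WithLp.toLp 2 v‖, Set.forall_mem_range.2 fun ⟨n, x⟩ => ?_⟩
  rw [div_le_iff₀ (by positivity)]
  calc _ ≤ opNorm (prodS S x n) * ‖WithLp.toLp 2 v‖ := norm_toLp_mulVec_le _ _
    _ ≤ K * r ^ n * ‖WithLp.toLp 2 v‖ := mul_le_mul_of_nonneg_right (hK x n) (norm_nonneg _)
    _ = _ := by ring

lemma norm_toLp_le_rotaStrangNorm [Nonempty I] (hr : 0 < r)
    (hK : ∀ x n, opNorm (prodS S x n) ≤ K * r ^ n) (v : Fin d → ℂ) :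
    ‖WithLp.toLp 2 v‖ ≤ rotaStrangNorm S r v := by
  refine (le_ciSup (bddAbove_rotaStrangNorm_terms hr hK v) (0, Classical.arbitrary _)).trans_eq' ?_
  simp [prodS]

lemma isNorm_rotaStrangNorm [Nonempty I] (hr : 0 < r)
    (hK : ∀ x n, opNorm (prodS S x n) ≤ K * r ^ n) : IsNorm (rotaStrangNorm S r) := by
  have hterm := fun v => le_ciSup (bddAbove_rotaStrangNorm_terms hr hK v)
  refine ⟨fun v => (norm_nonneg _).trans (norm_toLp_le_rotaStrangNorm hr hK v), fun v => ⟨?_, ?_⟩,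
    fun c v => ?_, fun v w => ?_⟩
  · intro hv
    simpa using (norm_toLp_le_rotaStrangNorm hr hK v).trans_eq hv
  · rintro rfl
    simp [rotaStrangNorm]
  · simp only [rotaStrangNorm, Matrix.mulVec_smul, WithLp.toLp_smul, norm_smul, mul_div_assoc,
      Real.mul_iSup_of_nonneg (norm_nonneg c)]
  · refine ciSup_le fun p => ?_
    rw [Matrix.mulVec_add, WithLp.toLp_add]
    calc _ ≤ (‖WithLp.toLp 2 (prodS S p.2 p.1 *ᵥ v)‖ + ‖WithLp.toLp 2 (prodS S p.2 p.1 *ᵥ w)‖)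
          / r ^ p.1 := by gcongr; exact norm_add_le _ _
      _ ≤ _ := by rw [add_div]; exact add_le_add (hterm v p) (hterm w p)

lemma rotaStrangNorm_mulVec_le [Nonempty I] (hr : 0 < r)
    (hK : ∀ x n, opNorm (prodS S x n) ≤ K * r ^ n) (i : I) (v : Fin d → ℂ) :
    rotaStrangNorm S r (S i *ᵥ v) ≤ r * rotaStrangNorm S r v := by
  refine ciSup_le fun ⟨n, x⟩ => ?_
  have hprod : prodS S (Stream'.cons i x) (n + 1) = prodS S x n * S i :=
    prodS_succ' S (Stream'.cons i x) n
  have hterm := le_ciSup (bddAbove_rotaStrangNorm_terms hr hK v) (n + 1, Stream'.cons i x)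
  dsimp only at hterm ⊢
  rw [hprod, ← Matrix.mulVec_mulVec, pow_succ, ← div_div, div_le_iff₀ hr] at hterm
  rwa [mul_comm]

lemma inducedOpNorm_rotaStrangNorm_le [Nonempty I] (hr : 0 < r)
    (hK : ∀ x n, opNorm (prodS S x n) ≤ K * r ^ n) (i : I) :
    inducedOpNorm (rotaStrangNorm S r) (S i) ≤ r :=
  Real.iSup_le (fun v => (rotaStrangNorm_mulVec_le hr hK i v).trans_eq (by rw [v.2, mul_one]))
    hr.le

end RotaStrang

section PreextremalNorm

variable {I : Type*} [Nonempty I] {S : I → Matrix (Fin d) (Fin d) ℂ} {C : ℝ}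

lemma exists_isNorm_inducedOpNorm_le (hC : ∀ i, opNorm (S i) ≤ C) {ε : ℝ} (hε : 0 < ε) :
    ∃ N, IsNorm N ∧ ∀ i, inducedOpNorm N (S i) ≤ jointSpectralRadius S + ε := by
  have hr : 0 < jointSpectralRadius S + ε := by linarith [jointSpectralRadius_nonneg hC]
  obtain ⟨K, hK⟩ := exists_opNorm_prodS_le_mul_pow hC (lt_add_of_pos_right _ hε)
  exact ⟨_, isNorm_rotaStrangNorm hr hK, inducedOpNorm_rotaStrangNorm_le hr hK⟩

lemma jointSpectralRadius_eq_iInf_iSup_inducedOpNorm (hC : ∀ i, opNorm (S i) ≤ C) :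
    jointSpectralRadius S =
      ⨅ N : {N : (Fin d → ℂ) → ℝ // IsNorm N}, ⨆ i, inducedOpNorm N.1 (S i) := by
  refine le_antisymm ?_ (le_of_forall_pos_le_add fun ε hε => ?_)
  · obtain ⟨N, hN, -⟩ := exists_isNorm_inducedOpNorm_le hC one_pos
    have : Nonempty {N : (Fin d → ℂ) → ℝ // IsNorm N} := ⟨⟨N, hN⟩⟩
    exact le_ciInf fun N => jointSpectralRadius_le_iSup_inducedOpNorm hC N.2
  · obtain ⟨N, hN, hNS⟩ := exists_isNorm_inducedOpNorm_le hC hε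
    have hbelow : BddBelow (Set.range fun N : {N : (Fin d → ℂ) → ℝ // IsNorm N} =>
        ⨆ i, inducedOpNorm N.1 (S i)) :=
      ⟨0, Set.forall_mem_range.2 fun N => Real.iSup_nonneg fun _ => N.2.inducedOpNorm_nonneg _⟩
    exact (ciInf_le hbelow ⟨N, hN⟩).trans
      (Real.iSup_le hNS (by linarith [jointSpectralRadius_nonneg hC]))

end PreextremalNorm

end

theorem exists_preextremal_norm_general {d : ℕ} {I : Type*} [Nonempty I]
    (S : I → Matrix (Fin d) (Fin d) ℂ)
    (hbdd : ∃ C : ℝ, ∀ i : I, opNorm (S i) ≤ C) :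
    (∀ ε : ℝ, 0 < ε →
      ∃ N : (Fin d → ℂ) → ℝ, IsNorm N ∧ ∀ i : I,
        inducedOpNorm N (S i) ≤
          Filter.limsup
            (fun n : ℕ => ⨆ x : ℕ → I, opNorm (prodS S x n) ^ (1 / (n : ℝ)))
            Filter.atTop + ε) ∧
      Filter.limsup
          (fun n : ℕ => ⨆ x : ℕ → I, opNorm (prodS S x n) ^ (1 / (n : ℝ)))
          Filter.atTop =
        ⨅ N : {N : (Fin d → ℂ) → ℝ // IsNorm N}, ⨆ i : I, inducedOpNorm N.1 (S i) := by
  obtain ⟨C, hC⟩ := hbdd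
  exact ⟨fun ε hε => exists_isNorm_inducedOpNorm_le hC hε,
    jointSpectralRadius_eq_iInf_iSup_inducedOpNorm hC⟩

/-- **Rota–Strang / pre-extremal norms.** For a bounded family of matrices and any
`ε > 0`, there is a vector norm on `ℂ^d` whose induced operator norm bounds every `S i`
by `ρ̂(S) + ε`; consequently `ρ̂(S)` is the infimum over all vector norms of
`sup_i N_op(S i)`. -/
theorem exists_preextremal_norm {d : ℕ} (hd : 1 ≤ d) {I : Type*} [Nonempty I]
    (S : I → Matrix (Fin d) (Fin d) ℂ)
    (hbdd : ∃ C : ℝ, ∀ i : I, opNorm (S i) ≤ C) :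
    (∀ ε : ℝ, 0 < ε →
      ∃ N : (Fin d → ℂ) → ℝ, IsNorm N ∧ ∀ i : I,
        inducedOpNorm N (S i) ≤
          Filter.limsup
            (fun n : ℕ => ⨆ x : ℕ → I, opNorm (prodS S x n) ^ (1 / (n : ℝ)))
            Filter.atTop + ε) ∧
      Filter.limsup
          (fun n : ℕ => ⨆ x : ℕ → I, opNorm (prodS S x n) ^ (1 / (n : ℝ)))
          Filter.atTop =
        ⨅ N : {N : (Fin d → ℂ) → ℝ // IsNorm N}, ⨆ i : I, inducedOpNorm N.1 (S i) :=
  exists_preextremal_norm_general S hbdd
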